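/- Orthogonal additivity of partial R²-values: let H be a real Hilbert space, let Z be a complete subspace, let X and W be complete subspaces with X + Z, W + Z and X + W + Z complete, and let y ∈ H with y^{⊥Z} ≠ 0. If X^{⊥Z} ⊥ W^{⊥Z} (i.e. ⟨x^{⊥Z}, w^{⊥Z}⟩ = 0 for all x ∈ X, w ∈ W), then R²_{y∼X+W|Z} = R²_{y∼X|Z} + R²_{y∼W|Z}. -/

import Mathlib

/-!
R²-calculus in real Hilbert spaces (Freidling & Zhao, "Optimization-based
Sensitivity Analysis for Unmeasured Confounding using Partial Correlations").
-/

noncomputable section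

open Submodule RealInnerProductSpace

variable {H : Type*} [NormedAddCommGroup H] [InnerProductSpace ℝ H]

/-- The residual `h^{⊥M} = h − P_M h` of `h` after projecting onto `M`. -/
def resid (M : Submodule ℝ H) [HasOrthogonalProjection M] (h : H) : H :=
  h - (orthogonalProjection M h : H)

/-- The marginal R²-value `R²_{y∼X} = 1 − ‖y^{⊥X}‖²/‖y‖²`. -/
def R2 (y : H) (X : Submodule ℝ H) [HasOrthogonalProjection X] : ℝ :=
  1 - ‖resid X y‖ ^ 2 / ‖y‖ ^ 2

/-- The partial R²-value `R²_{y∼X|Z} = (R²_{y∼X+Z} − R²_{y∼Z})/(1 − R²_{y∼Z})`. -/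
def R2p (y : H) (X Z : Submodule ℝ H) [HasOrthogonalProjection (X ⊔ Z)]
    [HasOrthogonalProjection Z] : ℝ :=
  (R2 y (X ⊔ Z) - R2 y Z) / (1 - R2 y Z)

/-- The partial R-value `R_{y∼x|Z} = ⟪y^{⊥Z}, x^{⊥Z}⟫/(‖y^{⊥Z}‖·‖x^{⊥Z}‖)`. -/
def Rp (y x : H) (Z : Submodule ℝ H) [HasOrthogonalProjection Z] : ℝ :=
  ⟪resid Z y, resid Z x⟫ / (‖resid Z y‖ * ‖resid Z x‖)

/-- The partial f-value `f_{y∼x|Z} = R_{y∼x|Z}/√(1 − R²_{y∼x|Z})`. -/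
def fp (y x : H) (Z : Submodule ℝ H) [HasOrthogonalProjection Z] : ℝ :=
  Rp y x Z / Real.sqrt (1 - Rp y x Z ^ 2)

/-- The regression estimand `β_{y∼d|M} = ⟪y^{⊥M}, d^{⊥M}⟫/‖d^{⊥M}‖²`. -/
def betaReg (y d : H) (M : Submodule ℝ H) [HasOrthogonalProjection M] : ℝ :=
  ⟪resid M y, resid M d⟫ / ‖resid M d‖ ^ 2

/-- `σ_{y∼M} = ‖y^{⊥M}‖`. -/
def sigv (y : H) (M : Submodule ℝ H) [HasOrthogonalProjection M] : ℝ :=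
  ‖resid M y‖

/-!
Write `e_M := y^{⊥Z} − y^{⊥(M+Z)} = P_{M+Z} y − P_Z y` for the part of `y` explained by `M`
beyond `Z`. By Pythagoras `R²_{y∼M|Z} = ‖e_M‖²/‖y^{⊥Z}‖²`, and `e_M = m^{⊥Z}` for some `m ∈ M`.
When `X^{⊥Z} ⊥ W^{⊥Z}`, the vector `y^{⊥Z} − e_X − e_W` is orthogonal to `X`, `W` and `Z`, so it
is the residual of `y` on `X + W + Z`; hence `e_{X+W} = e_X + e_W` with `e_X ⊥ e_W`, and
Pythagoras again splits `‖e_{X+W}‖²`.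
-/

section Residuals

variable (M : Submodule ℝ H) [HasOrthogonalProjection M]

lemma resid_eq_starProjection_orthogonal (h : H) : resid M h = Mᗮ.starProjection h :=
  (starProjection_orthogonal_val h).symm

lemma resid_mem_orthogonal (h : H) : resid M h ∈ Mᗮ := sub_starProjection_mem_orthogonal h

lemma sub_resid_mem (h : H) : h - resid M h ∈ M := by
  simp [resid]

lemma resid_eq_self_of_mem_orthogonal {h : H} (hh : h ∈ Mᗮ) : resid M h = h := by
  rw [resid_eq_starProjection_orthogonal, starProjection_eq_self_iff]
  exact hh

lemma resid_eq_of_sub_mem_of_mem_orthogonal {h r : H} (hsub : h - r ∈ M) (hr : r ∈ Mᗮ) :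
    resid M h = r := by
  rw [resid_eq_starProjection_orthogonal]
  exact eq_starProjection_of_mem_orthogonal hr (M.le_orthogonal_orthogonal hsub)

lemma inner_resid_left_eq_inner_resid_resid (a b : H) :
    ⟪resid M a, b⟫ = ⟪resid M a, resid M b⟫ := by
  simp only [resid_eq_starProjection_orthogonal, ← inner_starProjection_left_eq_right,
    ← ContinuousLinearMap.comp_apply, ← ContinuousLinearMap.mul_def,
    (isIdempotentElem_starProjection Mᗮ).eq]

end Residuals

lemma resid_mem_sup (M Z : Submodule ℝ H) [HasOrthogonalProjection Z] {m : H} (hm : m ∈ M) :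
    resid Z m ∈ M ⊔ Z := by
  have hproj : m - resid Z m ∈ M ⊔ Z := mem_sup_right (sub_resid_mem Z m)
  simpa using sub_mem (mem_sup_left hm) hproj

lemma norm_sq_resid_sub_norm_sq_resid_of_le {Z K : Submodule ℝ H} [HasOrthogonalProjection Z]
    [HasOrthogonalProjection K] (hZK : Z ≤ K) (y : H) :
    ‖resid Z y‖ ^ 2 - ‖resid K y‖ ^ 2 = ‖resid Z y - resid K y‖ ^ 2 := by
  have hmem : resid Z y - resid K y ∈ K := by
    simpa using sub_mem (sub_resid_mem K y) (hZK (sub_resid_mem Z y))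
  have hperp : ⟪resid K y, resid Z y - resid K y⟫ = 0 :=
    (mem_orthogonal' K _).mp (resid_mem_orthogonal K y) _ hmem
  have hpyth := norm_add_sq_real (resid K y) (resid Z y - resid K y)
  rw [add_sub_cancel, hperp] at hpyth
  linarith

lemma exists_mem_resid_eq_resid_sub_resid_sup (Z M : Submodule ℝ H) [HasOrthogonalProjection Z]
    [HasOrthogonalProjection (M ⊔ Z)] (y : H) :
    ∃ m ∈ M, resid Z m = resid Z y - resid (M ⊔ Z) y := by
  have hmem : resid Z y - resid (M ⊔ Z) y ∈ M ⊔ Z := by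
    simpa using sub_mem (sub_resid_mem (M ⊔ Z) y) (mem_sup_right (sub_resid_mem Z y))
  have hperp : resid Z y - resid (M ⊔ Z) y ∈ Zᗮ :=
    sub_mem (resid_mem_orthogonal Z y) (orthogonal_le le_sup_right (resid_mem_orthogonal _ y))
  obtain ⟨m, hm, z, hz, hmz⟩ := mem_sup.mp hmem
  refine ⟨m, hm, ?_⟩
  rw [← resid_eq_self_of_mem_orthogonal Z hperp, ← hmz, resid_eq_starProjection_orthogonal,
    resid_eq_starProjection_orthogonal, map_add, starProjection_orthogonal_apply_eq_zero hz,
    add_zero]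

/-- Both sides are `0` when `y^{⊥Z} = 0`, because `x / 0 = 0`. -/
lemma R2p_eq_norm_sq_div (y : H) (M Z : Submodule ℝ H) [HasOrthogonalProjection (M ⊔ Z)]
    [HasOrthogonalProjection Z] :
    R2p y M Z = ‖resid Z y - resid (M ⊔ Z) y‖ ^ 2 / ‖resid Z y‖ ^ 2 := by
  rw [← norm_sq_resid_sub_norm_sq_resid_of_le le_sup_right]
  rcases eq_or_ne ‖y‖ 0 with hy | hy
  · simp [R2p, R2, norm_eq_zero.mp hy, resid]
  · simp only [R2p, R2]
    field_simp
    ring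

lemma resid_sup_sup_eq {Z X W : Submodule ℝ H} [HasOrthogonalProjection Z]
    [HasOrthogonalProjection (X ⊔ Z)] [HasOrthogonalProjection (W ⊔ Z)]
    [HasOrthogonalProjection (X ⊔ W ⊔ Z)]
    (horth : ∀ x ∈ X, ∀ w ∈ W, ⟪resid Z x, resid Z w⟫ = 0) (y : H) :
    resid (X ⊔ W ⊔ Z) y = resid (X ⊔ Z) y + resid (W ⊔ Z) y - resid Z y := by
  obtain ⟨x, hx, hxy⟩ := exists_mem_resid_eq_resid_sub_resid_sup Z X y
  obtain ⟨w, hw, hwy⟩ := exists_mem_resid_eq_resid_sub_resid_sup Z W y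
  have hwX : resid Z w ∈ Xᗮ := fun a ha => by
    rw [real_inner_comm, inner_resid_left_eq_inner_resid_resid, real_inner_comm, horth a ha w hw]
  have hxW : resid Z x ∈ Wᗮ := fun b hb => by
    rw [real_inner_comm, inner_resid_left_eq_inner_resid_resid, horth x hx b hb]
  apply resid_eq_of_sub_mem_of_mem_orthogonal
  · have hdecomp : y - (resid (X ⊔ Z) y + resid (W ⊔ Z) y - resid Z y)
        = (y - resid Z y) + resid Z x + resid Z w := by
      rw [hxy, hwy]; abel
    rw [hdecomp]
    exact add_mem (add_mem (mem_sup_right (sub_resid_mem Z y))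
      (sup_le_sup_right le_sup_left Z (resid_mem_sup X Z hx)))
      (sup_le_sup_right le_sup_right Z (resid_mem_sup W Z hw))
  · rw [← inf_orthogonal, ← inf_orthogonal]
    refine ⟨⟨?_, ?_⟩, ?_⟩
    · have hX : resid (X ⊔ Z) y + resid (W ⊔ Z) y - resid Z y
          = resid (X ⊔ Z) y - resid Z w := by
        rw [hwy]; abel
      rw [hX]
      exact sub_mem (orthogonal_le le_sup_left (resid_mem_orthogonal _ y)) hwX
    · have hW : resid (X ⊔ Z) y + resid (W ⊔ Z) y - resid Z y
          = resid (W ⊔ Z) y - resid Z x := by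
        rw [hxy]; abel
      rw [hW]
      exact sub_mem (orthogonal_le le_sup_left (resid_mem_orthogonal _ y)) hxW
    · have hZ : resid (X ⊔ Z) y + resid (W ⊔ Z) y - resid Z y
          = resid Z y - resid Z x - resid Z w := by
        rw [hxy, hwy]; abel
      rw [hZ]
      exact sub_mem (sub_mem (resid_mem_orthogonal Z y) (resid_mem_orthogonal Z x))
        (resid_mem_orthogonal Z w)

theorem partial_R2_orthogonal_additivity_general
    (Z X W : Submodule ℝ H) [CompleteSpace Z]
    [CompleteSpace ↥(X ⊔ Z)] [CompleteSpace ↥(W ⊔ Z)] [CompleteSpace ↥(X ⊔ W ⊔ Z)]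
    (y : H)
    (horth : ∀ x ∈ X, ∀ w ∈ W, ⟪resid Z x, resid Z w⟫ = 0) :
    R2p y (X ⊔ W) Z = R2p y X Z + R2p y W Z := by
  obtain ⟨x, hx, hxy⟩ := exists_mem_resid_eq_resid_sub_resid_sup Z X y
  obtain ⟨w, hw, hwy⟩ := exists_mem_resid_eq_resid_sub_resid_sup Z W y
  have hsplit : resid Z y - resid (X ⊔ W ⊔ Z) y
      = (resid Z y - resid (X ⊔ Z) y) + (resid Z y - resid (W ⊔ Z) y) := by
    rw [resid_sup_sup_eq horth]; abel
  have hperp : ⟪resid Z y - resid (X ⊔ Z) y, resid Z y - resid (W ⊔ Z) y⟫ = 0 := by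
    rw [← hxy, ← hwy]; exact horth x hx w hw
  rw [R2p_eq_norm_sq_div, R2p_eq_norm_sq_div, R2p_eq_norm_sq_div, ← add_div, hsplit,
    norm_add_sq_real, hperp]
  ring

/-- orthogonal additivity of partial R²-values. -/
theorem partial_R2_orthogonal_additivity [CompleteSpace H]
    (Z X W : Submodule ℝ H) [CompleteSpace Z] [CompleteSpace X] [CompleteSpace W]
    [CompleteSpace ↥(X ⊔ Z)] [CompleteSpace ↥(W ⊔ Z)] [CompleteSpace ↥(X ⊔ W ⊔ Z)]
    (y : H) (hy : resid Z y ≠ 0)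
    (horth : ∀ x ∈ X, ∀ w ∈ W, ⟪resid Z x, resid Z w⟫ = 0) :
    R2p y (X ⊔ W) Z = R2p y X Z + R2p y W Z :=
  partial_R2_orthogonal_additivity_general Z X W y horth
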